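/- Let V be a finite-dimensional complex vector space, Ṽ = V ⊗ ℂ[t,t⁻¹], and α ∈ ℂ∖ℤ. The representation θ of Ŝ'(2,α) on W^{∞/2+*}(Ṽ) extends to a representation of a central extension of Der S'(2,α) = S'(2,α) ⋊ ℂ𝖧 by letting the exterior derivation 𝖧 act as θ(𝖧) = −Σ_uΣ_{m∈ℤ} :τ(u_m)ε(u_m'):; in particular [θ(𝖧),θ(𝔵_k)] = θ(𝔵_k), [θ(𝖧),θ(𝔥_k^α)] = −θ(𝔥_k^α), [θ(𝖧),θ(𝔭_k)] = θ(𝔭_k), [θ(𝖧),θ(𝔶_k^α)] = −θ(𝔶_k^α), and θ(𝖧) commutes with θ(ℒ_n^α), θ(E_n), θ(H_n), θ(F_n). -/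

import Mathlib

noncomputable section

open Function

/-- Kronecker delta `δ_{n,0}` with values in `ℂ`. -/
def deltaZ (n : ℤ) : ℂ := if n = 0 then 1 else 0

/-- The semi-infinite Weil module `W^{∞/2+*}(Ṽ)` attached to a loop space with homogeneous
basis `u_m` (`u : ι`, `m : ℤ`, `u_m = u ⊗ tᵐ`): a complex vector space `W` equipped with
operators `β(u_m)`, `γ(u_m')` (the symmetric part) and `τ(u_m)`, `ε(u_m')` (the exterior
part) obeying the canonical (anti)commutation relations, with a vacuum vector annihilated
by `β(x), τ(x)` for `x` of positive degree and by `γ(x'), ε(x')` for `x'` dual to vectors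
of nonpositive degree, and cyclically generated by the operators from the vacuum. -/
structure WeilModule (ι : Type*) [DecidableEq ι] (W : Type*) [AddCommGroup W] [Module ℂ W] where
  vac : W
  β : ι → ℤ → Module.End ℂ W
  γ : ι → ℤ → Module.End ℂ W
  τ : ι → ℤ → Module.End ℂ W
  ε : ι → ℤ → Module.End ℂ W
  rel_γβ : ∀ u m v k, γ u m * β v k - β v k * γ u m = if u = v ∧ m = k then 1 else 0
  rel_ββ : ∀ u m v k, β u m * β v k = β v k * β u m
  rel_γγ : ∀ u m v k, γ u m * γ v k = γ v k * γ u m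
  rel_ετ : ∀ u m v k, ε u m * τ v k + τ v k * ε u m = if u = v ∧ m = k then 1 else 0
  rel_ττ : ∀ u m v k, τ u m * τ v k + τ v k * τ u m = 0
  rel_εε : ∀ u m v k, ε u m * ε v k + ε v k * ε u m = 0
  rel_βτ : ∀ u m v k, β u m * τ v k = τ v k * β u m
  rel_βε : ∀ u m v k, β u m * ε v k = ε v k * β u m
  rel_γτ : ∀ u m v k, γ u m * τ v k = τ v k * γ u m
  rel_γε : ∀ u m v k, γ u m * ε v k = ε v k * γ u m
  vac_β : ∀ u m, 0 < m → β u m vac = 0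
  vac_γ : ∀ u m, m ≤ 0 → γ u m vac = 0
  vac_τ : ∀ u m, 0 < m → τ u m vac = 0
  vac_ε : ∀ u m, m ≤ 0 → ε u m vac = 0
  cyclic : ∀ p : Submodule ℂ W, vac ∈ p →
    (∀ u m, ∀ w ∈ p, β u m w ∈ p ∧ γ u m w ∈ p ∧ τ u m w ∈ p ∧ ε u m w ∈ p) → p = ⊤

namespace WeilModule

variable {ι W : Type*} [DecidableEq ι] [AddCommGroup W] [Module ℂ W]

/-- Normal ordering `:τ(u_a) ε(v_b'):`  (`ε(v_b')` is an annihilation operator iff `b ≤ 0`). -/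
def noτε (M : WeilModule ι W) (u : ι) (a : ℤ) (v : ι) (b : ℤ) : Module.End ℂ W :=
  if b ≤ 0 then M.τ u a * M.ε v b else -(M.ε v b * M.τ u a)

/-- Normal ordering `:β(u_a) γ(v_b'):`. -/
def noβγ (M : WeilModule ι W) (u : ι) (a : ℤ) (v : ι) (b : ℤ) : Module.End ℂ W :=
  if b ≤ 0 then M.β u a * M.γ v b else M.γ v b * M.β u a

/-- Normal ordering `:γ(v_b') β(u_a):`. -/
def noγβ (M : WeilModule ι W) (v : ι) (b : ℤ) (u : ι) (a : ℤ) : Module.End ℂ W :=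
  if 0 < b then M.γ v b * M.β u a else M.β u a * M.γ v b

end WeilModule

/-- The commutation relations of the centrally extended superconformal algebra
`Ŝ'(2,α)` (relations (4.8) together with the cocycle (4.9) of Kac–van de Leur),
holding pointwise on the submodule `P`, with the central element `𝒸` acting as `C • id`:
`Lr n ↦ ℒ_n^α`, `E n ↦ E_n`, `Hc n ↦ H_n`, `F n ↦ F_n` (even part),
`hh n ↦ 𝔥_n^α`, `pp n ↦ 𝔭_n`, `xx n ↦ 𝔵_n`, `yy n ↦ 𝔶_n^α` (odd part).
All supercommutators not listed in (4.8) vanish. -/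
def IsS2RepHatOn {W : Type*} [AddCommGroup W] [Module ℂ W] (P : Submodule ℂ W)
    (α C : ℂ) (Lr E Hc F hh pp xx yy : ℤ → Module.End ℂ W) : Prop :=
  (∀ n k, ∀ w ∈ P, (Lr n * Lr k - Lr k * Lr n) w
      = ((n : ℂ) - (k : ℂ)) • Lr (n + k) w
        + (C * (1 / 12) * (n : ℂ) * ((n : ℂ) ^ 2 - 1) * deltaZ (n + k)) • w) ∧
  (∀ n k, ∀ w ∈ P, (E n * F k - F k * E n) w
      = Hc (n + k) w + (C * (1 / 6) * (n : ℂ) * deltaZ (n + k)) • w) ∧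
  (∀ n k, ∀ w ∈ P, (Hc n * E k - E k * Hc n) w = (2 : ℂ) • E (n + k) w) ∧
  (∀ n k, ∀ w ∈ P, (Hc n * F k - F k * Hc n) w = (-2 : ℂ) • F (n + k) w) ∧
  (∀ n k, ∀ w ∈ P, (Hc n * Hc k - Hc k * Hc n) w
      = (C * (1 / 3) * (n : ℂ) * deltaZ (n + k)) • w) ∧
  (∀ n k, ∀ w ∈ P, (Lr n * E k - E k * Lr n) w = (-(k : ℂ)) • E (n + k) w) ∧
  (∀ n k, ∀ w ∈ P, (Lr n * Hc k - Hc k * Lr n) w = (-(k : ℂ)) • Hc (n + k) w) ∧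
  (∀ n k, ∀ w ∈ P, (Lr n * F k - F k * Lr n) w = (-(k : ℂ)) • F (n + k) w) ∧
  (∀ n k, ∀ w ∈ P, (Lr n * hh k - hh k * Lr n) w
      = (((n : ℂ) - 2 * (k : ℂ) + 1 - α) / 2) • hh (n + k) w) ∧
  (∀ n k, ∀ w ∈ P, (Lr n * pp k - pp k * Lr n) w
      = (((n : ℂ) - 2 * (k : ℂ) - 1 + α) / 2) • pp (n + k) w) ∧
  (∀ n k, ∀ w ∈ P, (Lr n * xx k - xx k * Lr n) w
      = (((n : ℂ) - 2 * (k : ℂ) - 1 + α) / 2) • xx (n + k) w) ∧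
  (∀ n k, ∀ w ∈ P, (Lr n * yy k - yy k * Lr n) w
      = (((n : ℂ) - 2 * (k : ℂ) + 1 - α) / 2) • yy (n + k) w) ∧
  (∀ n k, ∀ w ∈ P, (E n * yy k - yy k * E n) w = hh (n + k) w) ∧
  (∀ n k, ∀ w ∈ P, (F n * hh k - hh k * F n) w = yy (n + k) w) ∧
  (∀ n k, ∀ w ∈ P, (E n * pp k - pp k * E n) w = xx (n + k) w) ∧
  (∀ n k, ∀ w ∈ P, (F n * xx k - xx k * F n) w = pp (n + k) w) ∧
  (∀ n k, ∀ w ∈ P, (Hc n * hh k - hh k * Hc n) w = hh (n + k) w) ∧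
  (∀ n k, ∀ w ∈ P, (Hc n * yy k - yy k * Hc n) w = -(yy (n + k) w)) ∧
  (∀ n k, ∀ w ∈ P, (Hc n * xx k - xx k * Hc n) w = xx (n + k) w) ∧
  (∀ n k, ∀ w ∈ P, (Hc n * pp k - pp k * Hc n) w = -(pp (n + k) w)) ∧
  (∀ n k, ∀ w ∈ P, (hh n * xx k + xx k * hh n) w
      = ((k : ℂ) + 1 - (n : ℂ) - α) • E (n + k) w) ∧
  (∀ n k, ∀ w ∈ P, (pp n * yy k + yy k * pp n) w
      = ((k : ℂ) - (n : ℂ) - 1 + α) • F (n + k) w) ∧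
  (∀ n k, ∀ w ∈ P, (hh n * pp k + pp k * hh n) w
      = Lr (n + k) w - (((k : ℂ) - (n : ℂ) + 1 - α) / 2) • Hc (n + k) w
        + (C * (1 / 6) * (((n : ℂ) - 1 + (α + 1) / 2) ^ 2 - 1 / 4) * deltaZ (n + k)) • w) ∧
  (∀ n k, ∀ w ∈ P, (xx n * yy k + yy k * xx n) w
      = -(Lr (n + k) w) + (((k : ℂ) - (n : ℂ) - 1 + α) / 2) • Hc (n + k) w
        - (C * (1 / 6) * ((-(n : ℂ) - 1 + (α + 1) / 2) ^ 2 - 1 / 4) * deltaZ (n + k)) • w) ∧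
  -- all remaining supercommutators vanish
  (∀ n k, ∀ w ∈ P, (E n * E k - E k * E n) w = 0) ∧
  (∀ n k, ∀ w ∈ P, (F n * F k - F k * F n) w = 0) ∧
  (∀ n k, ∀ w ∈ P, (E n * hh k - hh k * E n) w = 0) ∧
  (∀ n k, ∀ w ∈ P, (E n * xx k - xx k * E n) w = 0) ∧
  (∀ n k, ∀ w ∈ P, (F n * pp k - pp k * F n) w = 0) ∧
  (∀ n k, ∀ w ∈ P, (F n * yy k - yy k * F n) w = 0) ∧
  (∀ n k, ∀ w ∈ P, (hh n * hh k + hh k * hh n) w = 0) ∧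
  (∀ n k, ∀ w ∈ P, (hh n * yy k + yy k * hh n) w = 0) ∧
  (∀ n k, ∀ w ∈ P, (pp n * pp k + pp k * pp n) w = 0) ∧
  (∀ n k, ∀ w ∈ P, (pp n * xx k + xx k * pp n) w = 0) ∧
  (∀ n k, ∀ w ∈ P, (xx n * xx k + xx k * xx n) w = 0) ∧
  (∀ n k, ∀ w ∈ P, (yy n * yy k + yy k * yy n) w = 0)


/-! Up to a scalar, each summand `−:τ(u_m)ε(u_m'):` of `θ(𝖧)` is the number operator
`ε(u_m')τ(u_m)`, whose commutator with `ε(u_k')`, `τ(u_k)`, `β`, `γ` is `δ·ε(u_k')`, `−δ·τ(u_k)`,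
`0`, `0`. Summing over the modes, `ad θ(𝖧)` is a derivation with eigenvalue `1` on each `ε`,
`−1` on each `τ` and `0` on each `β`, `γ`. Every quadratic monomial in these operators is then an
eigenvector of `ad θ(𝖧)`, with eigenvalue the number of `ε` factors minus the number of `τ`
factors, and so is every locally finite sum of monomials sharing this eigenvalue. -/

section AdEigen

variable {R A : Type*} [CommRing R] [Ring A] [Algebra R A]

def IsAdEigen (D : A) (a : R) (X : A) : Prop :=
  D * X - X * D = a • X

namespace IsAdEigen

variable {D C X Y : A} {a b : R}

theorem zero_iff_commute : IsAdEigen D (0 : R) X ↔ Commute D X := by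
  rw [IsAdEigen, zero_smul, sub_eq_zero]
  rfl

theorem mul (hX : IsAdEigen D a X) (hY : IsAdEigen D b Y) : IsAdEigen D (a + b) (X * Y) := by
  unfold IsAdEigen at *
  calc D * (X * Y) - X * Y * D = (D * X - X * D) * Y + X * (D * Y - Y * D) := by noncomm_ring
    _ = (a + b) • (X * Y) := by rw [hX, hY, smul_mul_assoc, mul_smul_comm, add_smul]

theorem smul (hX : IsAdEigen D a X) (c : R) : IsAdEigen D a (c • X) := by
  unfold IsAdEigen at *
  rw [mul_smul_comm, smul_mul_assoc, ← smul_sub, hX, smul_comm]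

theorem add (hX : IsAdEigen D a X) (hY : IsAdEigen D a Y) : IsAdEigen D a (X + Y) := by
  unfold IsAdEigen at *
  rw [mul_add, add_mul, add_sub_add_comm, hX, hY, smul_add]

theorem neg (hX : IsAdEigen D a X) : IsAdEigen D a (-X) := by
  simpa using hX.smul (-1 : R)

theorem sub_left (hX : IsAdEigen D a X) (hC : Commute C X) : IsAdEigen (D - C) a X := by
  unfold IsAdEigen at *
  rw [sub_mul, mul_sub, hC.eq, ← hX]
  abel

end IsAdEigen

end AdEigen

theorem finsum_pi_single {α M : Type*} [DecidableEq α] [AddCommMonoid M] (a : α) (x : M) :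
    ∑ᶠ b, (Pi.single a x : α → M) b = x := by
  rw [finsum_eq_single _ a fun b hb => by simp [hb], Pi.single_eq_same]

section LocallyFiniteSum

variable {σ R W : Type*} [CommRing R] [AddCommGroup W] [Module R W]

theorem IsAdEigen.finsum_left {N : σ → Module.End R W} {D X : Module.End R W} {g : σ → R}
    (hN : ∀ w, (support fun q => N q w).Finite) (hD : ∀ w, D w = ∑ᶠ q, N q w)
    (hg : (support g).Finite) (hX : ∀ q, IsAdEigen (N q) (g q) X) :
    IsAdEigen D (∑ᶠ q, g q) X := by
  ext w
  have hXN : (support fun q => X (N q w)).Finite :=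
    (hN w).subset (support_comp_subset (map_zero X) _)
  calc D (X w) - X (D w) = ∑ᶠ q, (N q (X w) - X (N q w)) := by
        rw [hD, hD, map_finsum X (hN w), finsum_sub_distrib (hN _) hXN]
    _ = ∑ᶠ q, g q • X w := finsum_congr fun q => congr($(hX q) w)
    _ = (∑ᶠ q, g q) • X w := (finsum_smul' hg _).symm

theorem IsAdEigen.smul_finsum_right {D A : Module.End R W} {f : σ → Module.End R W}
    {a : R} (c : R) (hf : ∀ w, (support fun p => f p w).Finite)
    (hA : ∀ w, A w = c • ∑ᶠ p, f p w) (h : ∀ p, IsAdEigen D a (f p)) : IsAdEigen D a A := by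
  ext w
  have hDf : (support fun p => D (f p w)).Finite :=
    (hf w).subset (support_comp_subset (map_zero D) _)
  calc D (A w) - A (D w) = c • ∑ᶠ p, (D (f p w) - f p (D w)) := by
        rw [hA, hA, map_smul, map_finsum D (hf w), finsum_sub_distrib hDf (hf _), smul_sub]
    _ = c • ∑ᶠ p, a • f p w := congrArg (c • ·) (finsum_congr fun p => congr($(h p) w))
    _ = a • A w := by rw [hA, ← smul_finsum' a (hf w), smul_comm]

end LocallyFiniteSum

namespace WeilModule

variable {ι W : Type*} [DecidableEq ι] [AddCommGroup W] [Module ℂ W] (M : WeilModule ι W)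

theorem neg_noτε_self (q : ι × ℤ) :
    -M.noτε q.1 q.2 q.1 q.2 = M.ε q.1 q.2 * M.τ q.1 q.2 - if q.2 ≤ 0 then 1 else 0 := by
  have hετ := M.rel_ετ q.1 q.2 q.1 q.2
  simp only [and_self, if_true] at hετ
  unfold noτε
  split_ifs
  · rw [← hετ]; abel
  · rw [neg_neg, sub_zero]

theorem isAdEigen_ε_mul_τ_ε (q : ι × ℤ) (u : ι) (m : ℤ) :
    IsAdEigen (M.ε q.1 q.2 * M.τ q.1 q.2) ((Pi.single (u, m) 1 : ι × ℤ → ℂ) q) (M.ε u m) := by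
  have hετ := M.rel_ετ u m q.1 q.2
  have hεε := M.rel_εε q.1 q.2 u m
  calc M.ε q.1 q.2 * M.τ q.1 q.2 * M.ε u m - M.ε u m * (M.ε q.1 q.2 * M.τ q.1 q.2)
      = M.ε q.1 q.2 * (M.ε u m * M.τ q.1 q.2 + M.τ q.1 q.2 * M.ε u m)
        - (M.ε q.1 q.2 * M.ε u m + M.ε u m * M.ε q.1 q.2) * M.τ q.1 q.2 := by noncomm_ring
    _ = (Pi.single (u, m) 1 : ι × ℤ → ℂ) q • M.ε u m := by
      obtain ⟨v, k⟩ := q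
      rw [hετ, hεε]
      by_cases h : u = v ∧ m = k
      · obtain ⟨rfl, rfl⟩ := h
        simp
      · simp [h, Prod.ext_iff, eq_comm]

theorem isAdEigen_ε_mul_τ_τ (q : ι × ℤ) (u : ι) (m : ℤ) :
    IsAdEigen (M.ε q.1 q.2 * M.τ q.1 q.2) (-(Pi.single (u, m) 1 : ι × ℤ → ℂ) q) (M.τ u m) := by
  have hττ := M.rel_ττ q.1 q.2 u m
  have hετ := M.rel_ετ q.1 q.2 u m
  calc M.ε q.1 q.2 * M.τ q.1 q.2 * M.τ u m - M.τ u m * (M.ε q.1 q.2 * M.τ q.1 q.2)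
      = M.ε q.1 q.2 * (M.τ q.1 q.2 * M.τ u m + M.τ u m * M.τ q.1 q.2)
        - (M.ε q.1 q.2 * M.τ u m + M.τ u m * M.ε q.1 q.2) * M.τ q.1 q.2 := by noncomm_ring
    _ = -(Pi.single (u, m) 1 : ι × ℤ → ℂ) q • M.τ u m := by
      obtain ⟨v, k⟩ := q
      rw [hττ, hετ]
      by_cases h : v = u ∧ k = m
      · obtain ⟨rfl, rfl⟩ := h
        simp
      · simp [h, Prod.ext_iff]

theorem commute_ε_mul_τ_β (q : ι × ℤ) (u : ι) (m : ℤ) :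
    Commute (M.ε q.1 q.2 * M.τ q.1 q.2) (M.β u m) :=
  (Commute.symm (M.rel_βε u m q.1 q.2)).mul_left (M.rel_βτ u m q.1 q.2).symm

theorem commute_ε_mul_τ_γ (q : ι × ℤ) (u : ι) (m : ℤ) :
    Commute (M.ε q.1 q.2 * M.τ q.1 q.2) (M.γ u m) :=
  (Commute.symm (M.rel_γε u m q.1 q.2)).mul_left (M.rel_γτ u m q.1 q.2).symm

/-- `D` is `θ(𝖧) = −Σ_u Σ_m :τ(u_m)ε(u_m'):`, a locally finite sum. -/
def IsFermionNumberOp (D : Module.End ℂ W) : Prop :=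
  (∀ w, (support fun q : ι × ℤ => M.noτε q.1 q.2 q.1 q.2 w).Finite) ∧
    ∀ w, D w = -∑ᶠ q : ι × ℤ, M.noτε q.1 q.2 q.1 q.2 w

namespace IsFermionNumberOp

variable {M} {D : Module.End ℂ W}

theorem isAdEigen (hD : M.IsFermionNumberOp D) {X : Module.End ℂ W} {g : ι × ℤ → ℂ}
    (hg : (support g).Finite) (hX : ∀ q, IsAdEigen (M.ε q.1 q.2 * M.τ q.1 q.2) (g q) X) :
    IsAdEigen D (∑ᶠ q, g q) X := by
  refine IsAdEigen.finsum_left (N := fun q => -M.noτε q.1 q.2 q.1 q.2)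
    (fun w => by simpa using hD.1 w) (fun w => by simp [hD.2, finsum_neg_distrib]) hg
    fun q => ?_
  rw [neg_noτε_self]
  exact (hX q).sub_left (by split_ifs <;> simp)

theorem isAdEigen_ε (hD : M.IsFermionNumberOp D) (u : ι) (m : ℤ) :
    IsAdEigen D (1 : ℂ) (M.ε u m) := by
  simpa [finsum_pi_single] using
    hD.isAdEigen ((Set.finite_singleton (u, m)).subset Pi.support_single_subset)
      fun q => M.isAdEigen_ε_mul_τ_ε q u m

theorem isAdEigen_τ (hD : M.IsFermionNumberOp D) (u : ι) (m : ℤ) :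
    IsAdEigen D (-1 : ℂ) (M.τ u m) := by
  simpa [finsum_neg_distrib, finsum_pi_single] using
    hD.isAdEigen (by simpa only [support_fun_neg] using
      (Set.finite_singleton (u, m)).subset Pi.support_single_subset)
      fun q => M.isAdEigen_ε_mul_τ_τ q u m

theorem isAdEigen_β (hD : M.IsFermionNumberOp D) (u : ι) (m : ℤ) :
    IsAdEigen D (0 : ℂ) (M.β u m) := by
  simpa using hD.isAdEigen (g := 0) (by simp) fun q =>
    IsAdEigen.zero_iff_commute.mpr (M.commute_ε_mul_τ_β q u m)

theorem isAdEigen_γ (hD : M.IsFermionNumberOp D) (u : ι) (m : ℤ) :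
    IsAdEigen D (0 : ℂ) (M.γ u m) := by
  simpa using hD.isAdEigen (g := 0) (by simp) fun q =>
    IsAdEigen.zero_iff_commute.mpr (M.commute_ε_mul_τ_γ q u m)

theorem isAdEigen_noτε (hD : M.IsFermionNumberOp D) (u : ι) (a : ℤ) (v : ι) (b : ℤ) :
    IsAdEigen D (0 : ℂ) (M.noτε u a v b) := by
  unfold noτε
  split_ifs
  · simpa using (hD.isAdEigen_τ u a).mul (hD.isAdEigen_ε v b)
  · simpa using ((hD.isAdEigen_ε v b).mul (hD.isAdEigen_τ u a)).neg

theorem isAdEigen_noβγ (hD : M.IsFermionNumberOp D) (u : ι) (a : ℤ) (v : ι) (b : ℤ) :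
    IsAdEigen D (0 : ℂ) (M.noβγ u a v b) := by
  unfold noβγ
  split_ifs
  · simpa using (hD.isAdEigen_β u a).mul (hD.isAdEigen_γ v b)
  · simpa using (hD.isAdEigen_γ v b).mul (hD.isAdEigen_β u a)

end IsFermionNumberOp

end WeilModule

open WeilModule in
theorem derhat_rep_on_weil_complex_general
    (ι : Type*) [DecidableEq ι]
    (V : Type*) [AddCommGroup V] [Module ℂ V]
    (W : Type*) [AddCommGroup W] [Module ℂ W]
    (M : WeilModule ι W) (alf : ℂ)
    (ΘL ΘH Θh Θp ΘE ΘF Θx Θy : ℤ → Module.End ℂ W)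
    -- local finiteness of all the quadratic sums
    (hfinL : ∀ (n : ℤ) (w : W), (Function.support fun p : ι × ℤ =>
        (((p.2 : ℂ) - alf / 2) • (M.noτε p.1 ((p.2 + n : ℤ)) p.1 p.2 + M.noβγ p.1 ((p.2 + n : ℤ)) p.1 p.2)) w).Finite)
    (hfinH : ∀ (n : ℤ) (w : W), (Function.support fun p : ι × ℤ =>
        (M.noβγ p.1 p.2 p.1 ((p.2 + n : ℤ))) w).Finite)
    (hfinh : ∀ (n : ℤ) (w : W), (Function.support fun p : ι × ℤ =>
        (M.γ p.1 ((p.2 + n : ℤ)) * M.τ p.1 p.2) w).Finite)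
    (hfinp : ∀ (n : ℤ) (w : W), (Function.support fun p : ι × ℤ =>
        (((p.2 : ℂ) - alf / 2) • (M.β p.1 ((p.2 - n : ℤ)) * M.ε p.1 p.2)) w).Finite)
    (hfinE : ∀ (n : ℤ) (w : W), (Function.support fun p : ι × ℤ =>
        (M.γ p.1 p.2 * M.γ p.1 ((1 - p.2 + n : ℤ))) w).Finite)
    (hfinF : ∀ (n : ℤ) (w : W), (Function.support fun p : ι × ℤ =>
        (M.β p.1 p.2 * M.β p.1 ((1 - p.2 - n : ℤ))) w).Finite)
    (hfiny : ∀ (n : ℤ) (w : W), (Function.support fun p : ι × ℤ =>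
        (M.β p.1 p.2 * M.τ p.1 ((1 - p.2 - n : ℤ))) w).Finite)
    (hfinx : ∀ (n : ℤ) (w : W), (Function.support fun p : ι × ℤ =>
        (((p.2 : ℂ) - alf / 2) • (M.γ p.1 ((1 - p.2 + n : ℤ)) * M.ε p.1 p.2)) w).Finite)
    -- the defining formulas (5.2) for the operators
    (hΘL : ∀ (n : ℤ) (w : W), ΘL n w = -∑ᶠ p : ι × ℤ, (((p.2 : ℂ) - alf / 2) • (M.noτε p.1 ((p.2 + n : ℤ)) p.1 p.2 + M.noβγ p.1 ((p.2 + n : ℤ)) p.1 p.2)) w)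
    (hΘH : ∀ (n : ℤ) (w : W), ΘH n w = -∑ᶠ p : ι × ℤ, (M.noβγ p.1 p.2 p.1 ((p.2 + n : ℤ))) w)
    (hΘh : ∀ (n : ℤ) (w : W), Θh n w = ∑ᶠ p : ι × ℤ, (M.γ p.1 ((p.2 + n : ℤ)) * M.τ p.1 p.2) w)
    (hΘp : ∀ (n : ℤ) (w : W), Θp n w = ∑ᶠ p : ι × ℤ, (((p.2 : ℂ) - alf / 2) • (M.β p.1 ((p.2 - n : ℤ)) * M.ε p.1 p.2)) w)
    (hΘE : ∀ (n : ℤ) (w : W), ΘE n w = -((Complex.I / 2) • ∑ᶠ p : ι × ℤ, (M.γ p.1 p.2 * M.γ p.1 ((1 - p.2 + n : ℤ))) w))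
    (hΘF : ∀ (n : ℤ) (w : W), ΘF n w = -((Complex.I / 2) • ∑ᶠ p : ι × ℤ, (M.β p.1 p.2 * M.β p.1 ((1 - p.2 - n : ℤ))) w))
    (hΘy : ∀ (n : ℤ) (w : W), Θy n w = Complex.I • ∑ᶠ p : ι × ℤ, (M.β p.1 p.2 * M.τ p.1 ((1 - p.2 - n : ℤ))) w)
    (hΘx : ∀ (n : ℤ) (w : W), Θx n w = -(Complex.I • ∑ᶠ p : ι × ℤ, (((p.2 : ℂ) - alf / 2) • (M.γ p.1 ((1 - p.2 + n : ℤ)) * M.ε p.1 p.2)) w))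
    (ΘHd : Module.End ℂ W)
    (hfinHd : ∀ w : W, (Function.support fun p : ι × ℤ =>
        (M.noτε p.1 p.2 p.1 p.2) w).Finite)
    (hΘHd : ∀ w : W, ΘHd w = -∑ᶠ p : ι × ℤ, (M.noτε p.1 p.2 p.1 p.2) w) :
    (∀ k : ℤ, ΘHd * Θx k - Θx k * ΘHd = Θx k) ∧
    (∀ k : ℤ, ΘHd * Θh k - Θh k * ΘHd = -Θh k) ∧
    (∀ k : ℤ, ΘHd * Θp k - Θp k * ΘHd = Θp k) ∧
    (∀ k : ℤ, ΘHd * Θy k - Θy k * ΘHd = -Θy k) ∧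
    (∀ n : ℤ, ΘHd * (-ΘL (-n) + (((n : ℂ) + 1 - alf) / 2) • ΘH n
        + ((alf / 4 - alf ^ 2 / 8) * (Module.finrank ℂ V : ℂ) * deltaZ n) • 1)
      = (-ΘL (-n) + (((n : ℂ) + 1 - alf) / 2) • ΘH n
        + ((alf / 4 - alf ^ 2 / 8) * (Module.finrank ℂ V : ℂ) * deltaZ n) • 1) * ΘHd) ∧
    (∀ n : ℤ, ΘHd * ΘE n = ΘE n * ΘHd) ∧
    (∀ n : ℤ, ΘHd * ΘH n = ΘH n * ΘHd) ∧
    (∀ n : ℤ, ΘHd * ΘF n = ΘF n * ΘHd) := by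
  have hD : M.IsFermionNumberOp ΘHd := ⟨hfinHd, hΘHd⟩
  have hL : ∀ n, IsAdEigen ΘHd (0 : ℂ) (ΘL n) := fun n =>
    .smul_finsum_right (-1) (hfinL n) (fun w => by rw [hΘL, neg_one_smul]) fun p => by
      simpa using ((hD.isAdEigen_noτε _ _ _ _).add (hD.isAdEigen_noβγ _ _ _ _)).smul _
  have hH : ∀ n, IsAdEigen ΘHd (0 : ℂ) (ΘH n) := fun n =>
    .smul_finsum_right (-1) (hfinH n) (fun w => by rw [hΘH, neg_one_smul]) fun p =>
      hD.isAdEigen_noβγ _ _ _ _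
  have hh : ∀ k, IsAdEigen ΘHd (-1 : ℂ) (Θh k) := fun k =>
    .smul_finsum_right 1 (hfinh k) (fun w => by rw [hΘh, one_smul]) fun p => by
      simpa using (hD.isAdEigen_γ _ _).mul (hD.isAdEigen_τ _ _)
  have hp : ∀ k, IsAdEigen ΘHd (1 : ℂ) (Θp k) := fun k =>
    .smul_finsum_right 1 (hfinp k) (fun w => by rw [hΘp, one_smul]) fun p => by
      simpa using ((hD.isAdEigen_β _ _).mul (hD.isAdEigen_ε _ _)).smul _
  have hE : ∀ n, IsAdEigen ΘHd (0 : ℂ) (ΘE n) := fun n =>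
    .smul_finsum_right _ (hfinE n) (fun w => by rw [hΘE, neg_smul]) fun p => by
      simpa using (hD.isAdEigen_γ _ _).mul (hD.isAdEigen_γ _ _)
  have hF : ∀ n, IsAdEigen ΘHd (0 : ℂ) (ΘF n) := fun n =>
    .smul_finsum_right _ (hfinF n) (fun w => by rw [hΘF, neg_smul]) fun p => by
      simpa using (hD.isAdEigen_β _ _).mul (hD.isAdEigen_β _ _)
  have hy : ∀ k, IsAdEigen ΘHd (-1 : ℂ) (Θy k) := fun k =>
    .smul_finsum_right _ (hfiny k) (hΘy k) fun p => by
      simpa using (hD.isAdEigen_β _ _).mul (hD.isAdEigen_τ _ _)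
  have hx : ∀ k, IsAdEigen ΘHd (1 : ℂ) (Θx k) := fun k =>
    .smul_finsum_right _ (hfinx k) (fun w => by rw [hΘx, neg_smul]) fun p => by
      simpa using ((hD.isAdEigen_γ _ _).mul (hD.isAdEigen_ε _ _)).smul _
  simp only [IsAdEigen.zero_iff_commute] at hL hH hE hF
  refine ⟨fun k => (hx k).trans (one_smul _ _), fun k => (hh k).trans (neg_one_smul _ _),
    fun k => (hp k).trans (one_smul _ _), fun k => (hy k).trans (neg_one_smul _ _), fun n => ?_,
    fun n => (hE n).eq, fun n => (hH n).eq, fun n => (hF n).eq⟩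
  exact (((hL (-n)).neg_right.add_right ((hH n).smul_right _)).add_right
    ((Commute.one_right _).smul_right _)).eq

open WeilModule in
/-- For `α ∈ ℂ∖ℤ`, the representation `θ` of `Ŝ'(2,α)` on
`W^{∞/2+*}(Ṽ)` extends to a representation of a central extension of
`Der S'(2,α) = S'(2,α) ⋊ ℂ𝖧`, the exterior derivation `𝖧` acting as
`θ(𝖧) = −Σ_u Σ_m :τ(u_m)ε(u_m'):`; in particular `[θ(𝖧),θ(𝔵_k)] = θ(𝔵_k)`,
`[θ(𝖧),θ(𝔥_k^α)] = −θ(𝔥_k^α)`, `[θ(𝖧),θ(𝔭_k)] = θ(𝔭_k)`,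
`[θ(𝖧),θ(𝔶_k^α)] = −θ(𝔶_k^α)`, and `θ(𝖧)` commutes with
`θ(ℒ_n^α), θ(E_n), θ(H_n), θ(F_n)`. -/
theorem derhat_rep_on_weil_complex
    (ι : Type*) [Fintype ι] [DecidableEq ι]
    (V : Type*) [AddCommGroup V] [Module ℂ V] (bV : Module.Basis ι ℂ V)
    (W : Type*) [AddCommGroup W] [Module ℂ W]
    (M : WeilModule ι W) (alf : ℂ) (half : ∀ k : ℤ, alf ≠ (k : ℂ))
    (ΘL ΘH Θh Θp ΘE ΘF Θx Θy : ℤ → Module.End ℂ W)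
    -- local finiteness of all the quadratic sums
    (hfinL : ∀ (n : ℤ) (w : W), (Function.support fun p : ι × ℤ =>
        (((p.2 : ℂ) - alf / 2) • (M.noτε p.1 ((p.2 + n : ℤ)) p.1 p.2 + M.noβγ p.1 ((p.2 + n : ℤ)) p.1 p.2)) w).Finite)
    (hfinH : ∀ (n : ℤ) (w : W), (Function.support fun p : ι × ℤ =>
        (M.noβγ p.1 p.2 p.1 ((p.2 + n : ℤ))) w).Finite)
    (hfinh : ∀ (n : ℤ) (w : W), (Function.support fun p : ι × ℤ =>
        (M.γ p.1 ((p.2 + n : ℤ)) * M.τ p.1 p.2) w).Finite)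
    (hfinp : ∀ (n : ℤ) (w : W), (Function.support fun p : ι × ℤ =>
        (((p.2 : ℂ) - alf / 2) • (M.β p.1 ((p.2 - n : ℤ)) * M.ε p.1 p.2)) w).Finite)
    (hfinE : ∀ (n : ℤ) (w : W), (Function.support fun p : ι × ℤ =>
        (M.γ p.1 p.2 * M.γ p.1 ((1 - p.2 + n : ℤ))) w).Finite)
    (hfinF : ∀ (n : ℤ) (w : W), (Function.support fun p : ι × ℤ =>
        (M.β p.1 p.2 * M.β p.1 ((1 - p.2 - n : ℤ))) w).Finite)
    (hfiny : ∀ (n : ℤ) (w : W), (Function.support fun p : ι × ℤ =>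
        (M.β p.1 p.2 * M.τ p.1 ((1 - p.2 - n : ℤ))) w).Finite)
    (hfinx : ∀ (n : ℤ) (w : W), (Function.support fun p : ι × ℤ =>
        (((p.2 : ℂ) - alf / 2) • (M.γ p.1 ((1 - p.2 + n : ℤ)) * M.ε p.1 p.2)) w).Finite)
    -- the defining formulas (5.2) for the operators
    (hΘL : ∀ (n : ℤ) (w : W), ΘL n w = -∑ᶠ p : ι × ℤ, (((p.2 : ℂ) - alf / 2) • (M.noτε p.1 ((p.2 + n : ℤ)) p.1 p.2 + M.noβγ p.1 ((p.2 + n : ℤ)) p.1 p.2)) w)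
    (hΘH : ∀ (n : ℤ) (w : W), ΘH n w = -∑ᶠ p : ι × ℤ, (M.noβγ p.1 p.2 p.1 ((p.2 + n : ℤ))) w)
    (hΘh : ∀ (n : ℤ) (w : W), Θh n w = ∑ᶠ p : ι × ℤ, (M.γ p.1 ((p.2 + n : ℤ)) * M.τ p.1 p.2) w)
    (hΘp : ∀ (n : ℤ) (w : W), Θp n w = ∑ᶠ p : ι × ℤ, (((p.2 : ℂ) - alf / 2) • (M.β p.1 ((p.2 - n : ℤ)) * M.ε p.1 p.2)) w)
    (hΘE : ∀ (n : ℤ) (w : W), ΘE n w = -((Complex.I / 2) • ∑ᶠ p : ι × ℤ, (M.γ p.1 p.2 * M.γ p.1 ((1 - p.2 + n : ℤ))) w))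
    (hΘF : ∀ (n : ℤ) (w : W), ΘF n w = -((Complex.I / 2) • ∑ᶠ p : ι × ℤ, (M.β p.1 p.2 * M.β p.1 ((1 - p.2 - n : ℤ))) w))
    (hΘy : ∀ (n : ℤ) (w : W), Θy n w = Complex.I • ∑ᶠ p : ι × ℤ, (M.β p.1 p.2 * M.τ p.1 ((1 - p.2 - n : ℤ))) w)
    (hΘx : ∀ (n : ℤ) (w : W), Θx n w = -(Complex.I • ∑ᶠ p : ι × ℤ, (((p.2 : ℂ) - alf / 2) • (M.γ p.1 ((1 - p.2 + n : ℤ)) * M.ε p.1 p.2)) w))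
    (ΘHd : Module.End ℂ W)
    (hfinHd : ∀ w : W, (Function.support fun p : ι × ℤ =>
        (M.noτε p.1 p.2 p.1 p.2) w).Finite)
    (hΘHd : ∀ w : W, ΘHd w = -∑ᶠ p : ι × ℤ, (M.noτε p.1 p.2 p.1 p.2) w) :
    (∀ k : ℤ, ΘHd * Θx k - Θx k * ΘHd = Θx k) ∧
    (∀ k : ℤ, ΘHd * Θh k - Θh k * ΘHd = -Θh k) ∧
    (∀ k : ℤ, ΘHd * Θp k - Θp k * ΘHd = Θp k) ∧
    (∀ k : ℤ, ΘHd * Θy k - Θy k * ΘHd = -Θy k) ∧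
    (∀ n : ℤ, ΘHd * (-ΘL (-n) + (((n : ℂ) + 1 - alf) / 2) • ΘH n
        + ((alf / 4 - alf ^ 2 / 8) * (Module.finrank ℂ V : ℂ) * deltaZ n) • 1)
      = (-ΘL (-n) + (((n : ℂ) + 1 - alf) / 2) • ΘH n
        + ((alf / 4 - alf ^ 2 / 8) * (Module.finrank ℂ V : ℂ) * deltaZ n) • 1) * ΘHd) ∧
    (∀ n : ℤ, ΘHd * ΘE n = ΘE n * ΘHd) ∧
    (∀ n : ℤ, ΘHd * ΘH n = ΘH n * ΘHd) ∧
    (∀ n : ℤ, ΘHd * ΘF n = ΘF n * ΘHd) :=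
  derhat_rep_on_weil_complex_general ι V W M alf ΘL ΘH Θh Θp ΘE ΘF Θx Θy hfinL hfinH hfinh hfinp
    hfinE hfinF hfiny hfinx hΘL hΘH hΘh hΘp hΘE hΘF hΘy hΘx ΘHd hfinHd hΘHd
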